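/- arXiv:1604.03997 — 2 statements merged into one kernel-verified Lean document; each statement's English description precedes it below -/
import Mathlib

section
/- Let Γ ⊂ ℝⁿ be a Meyer, weakly almost periodic set and v ∈ ℝⁿ. Then the set Γ ∩ (Γ − v) = {x ∈ Γ : x + v ∈ Γ} is weakly almost periodic (i.e., it satisfies the weak almost periodicity estimate: for every ε > 0 there is R > 0 such that for all x, y there is w with the symmetric difference of translated R-patches of Γ ∩ (Γ−v) having at most ε·Vol(B_R) points). -/
/-!
If the `R'`-patches of `Γ` at `x` and `y` agree up to a translation `w`, where `R' = R + ‖v‖`,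
then so do the `R`-patches of `Γ ∩ (Γ - v)`, except at points of the mismatch `D` of `Γ`, of
`D - v`, and of `Γ` in the two shells between radii `R` and `R'`. Uniform discreteness bounds the
shells by packing disjoint balls, which costs `o(vol B_R)`. The radius `R'` supplied by weak almost
periodicity is automatically large: patches of a nonempty locally finite set cannot match exactly
for all pairs of centres (slide a ball until a new point enters), so `ε' · vol B_{R'} ≥ 1`.
-/

open Filter MeasureTheory Metric Pointwise

variable {E : Type*} [NormedAddCommGroup E] [MeasureSpace E]

/-- The uniform `R`-density of a set. -/
noncomputable def densR (Γ : Set E) (R : ℝ) : ℝ :=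
  ⨆ x : E, ((Γ ∩ ball x R).ncard : ℝ) / (volume (ball x R)).toReal

/-- The uniform upper density of a set. -/
noncomputable def upDens (Γ : Set E) : ℝ := limsup (densR Γ) atTop

/-- Uniformly discrete: balls of radius `r` contain at most one point. -/
def UnifDisc (Γ : Set E) : Prop := ∃ r > 0, ∀ x : E, (Γ ∩ closedBall x r).Subsingleton

/-- Relatively dense: balls of radius `R` contain at least one point. -/
def RelDense (Γ : Set E) : Prop := ∃ R > 0, ∀ x : E, (Γ ∩ closedBall x R).Nonempty

def Delone (Γ : Set E) : Prop := UnifDisc Γ ∧ RelDense Γ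

def Meyer (Γ : Set E) : Prop := Delone Γ ∧ Delone (Γ - Γ)

/-- Frequency of the difference `v` in `Γ`. -/
noncomputable def freq (Γ : Set E) (v : E) : ℝ :=
  upDens {x ∈ Γ | x + v ∈ Γ} / upDens Γ

/-- Weakly almost periodic set. -/
def WAP (Γ : Set E) : Prop :=
  Delone Γ ∧ ∀ ε > 0, ∃ R > 0, ∀ x y : E, ∃ v : E,
    ((symmDiff (Γ ∩ ball x R) ((fun z => z - v) '' (Γ ∩ ball y R))).ncard : ℝ)
      ≤ ε * (volume (ball (0 : E) R)).toReal

open Module Set Topology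
open scoped ENNReal

section Patches

variable {V : Type*} [NormedAddCommGroup V]

def patchDiff (Γ : Set V) (R : ℝ) (x y w : V) : Set V :=
  symmDiff (Γ ∩ ball x R) ((fun z => z - w) '' (Γ ∩ ball y R))

/-- `WAP Γ` unfolds to `Delone Γ ∧ ∀ ε > 0, ∃ R > 0, WAPAt Γ ε R`. -/
def WAPAt [MeasureSpace V] (Γ : Set V) (ε R : ℝ) : Prop :=
  ∀ x y : V, ∃ w : V, ((patchDiff Γ R x y w).ncard : ℝ) ≤ ε * volume.real (ball (0 : V) R)

theorem mem_image_sub_const_iff {A : Set V} {z w : V} :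
    z ∈ (fun z => z - w) '' A ↔ z + w ∈ A := by
  simp [sub_eq_iff_eq_add]

theorem patchDiff_inter_translate_subset {Γ : Set V} {R R' : ℝ} {v x y w : V}
    (h : R + ‖v‖ ≤ R') :
    patchDiff {z ∈ Γ | z + v ∈ Γ} R x y w ⊆
      patchDiff Γ R' x y w ∪ (fun z => z - v) '' patchDiff Γ R' x y w ∪
        ((fun z => z - w) '' (Γ ∩ (ball y R' \ ball y R)) ∪ Γ ∩ (ball x R' \ ball x R)) := by
  have hR : R ≤ R' := le_trans (le_add_of_nonneg_right (norm_nonneg v)) h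
  have hshift : ∀ {c z : V}, z ∈ ball c R → z + v ∈ ball c R' := fun {c z} hz => by
    rw [mem_ball] at hz ⊢
    calc dist (z + v) c ≤ dist (z + v) z + dist z c := dist_triangle _ _ _
      _ < ‖v‖ + R := by rw [dist_self_add_left]; linarith
      _ ≤ R' := by linarith
  intro z hz
  by_cases hzD : z ∈ patchDiff Γ R' x y w
  · exact Or.inl (Or.inl hzD)
  by_cases hzvD : z + v ∈ patchDiff Γ R' x y w
  · exact Or.inl (Or.inr (mem_image_sub_const_iff.2 hzvD))
  refine Or.inr ?_
  simp only [patchDiff, Set.mem_symmDiff, mem_image_sub_const_iff, mem_inter_iff, mem_ofPred_eq,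
    not_and, not_or, Classical.not_imp, not_not, mem_union, Set.mem_sdiff] at hz hzD hzvD ⊢
  rw [add_right_comm] at hzvD
  rcases hz with ⟨⟨⟨hzΓ, hzvΓ⟩, hzx⟩, hout⟩ | ⟨⟨⟨hzwΓ, hzwvΓ⟩, hzwy⟩, hout⟩
  · obtain ⟨hzwΓ, hzwy⟩ := hzD.1 ⟨hzΓ, ball_subset_ball hR hzx⟩
    have hzwvΓ := (hzvD.1 ⟨hzvΓ, hshift hzx⟩).1
    exact Or.inl ⟨hzwΓ, hzwy, hout ⟨hzwΓ, hzwvΓ⟩⟩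
  · obtain ⟨hzΓ, hzx⟩ := hzD.2 ⟨hzwΓ, ball_subset_ball hR hzwy⟩
    have hzvΓ := (hzvD.2 ⟨hzwvΓ, hshift hzwy⟩).1
    exact Or.inr ⟨hzΓ, hzx, hout ⟨hzΓ, hzvΓ⟩⟩

theorem patchDiff_finite {Γ : Set V} {R : ℝ} {x y : V} (hx : (Γ ∩ ball x R).Finite)
    (hy : (Γ ∩ ball y R).Finite) (w : V) : (patchDiff Γ R x y w).Finite :=
  (hx.union (hy.image _)).subset symmDiff_subset_union

theorem ncard_patchDiff_inter_translate_le {Γ : Set V} {R R' : ℝ} {v x y w : V}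
    (h : R + ‖v‖ ≤ R') (hx : (Γ ∩ ball x R').Finite) (hy : (Γ ∩ ball y R').Finite) :
    (patchDiff {z ∈ Γ | z + v ∈ Γ} R x y w).ncard ≤
      2 * (patchDiff Γ R' x y w).ncard + (Γ ∩ (ball y R' \ ball y R)).ncard +
        (Γ ∩ (ball x R' \ ball x R)).ncard := by
  have hD := patchDiff_finite hx hy w
  have hAx : (Γ ∩ (ball x R' \ ball x R)).Finite :=
    hx.subset (inter_subset_inter_right _ sdiff_subset)
  have hAy : (Γ ∩ (ball y R' \ ball y R)).Finite :=
    hy.subset (inter_subset_inter_right _ sdiff_subset)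
  calc _ ≤ _ := ncard_le_ncard (patchDiff_inter_translate_subset h)
        ((hD.union (hD.image _)).union ((hAy.image _).union hAx))
    _ ≤ _ := (ncard_union_le _ _).trans
        (add_le_add (ncard_union_le _ _) (ncard_union_le _ _))
    _ = _ := by
      rw [ncard_image_of_injective _ sub_left_injective,
        ncard_image_of_injective _ sub_left_injective]
      ring

end Patches

section Discrete

variable {V : Type*} [NormedAddCommGroup V] {Γ : Set V}

theorem pairwiseDisjoint_ball_half {r : ℝ} (hΓ : ∀ z, (Γ ∩ closedBall z r).Subsingleton) :
    Γ.PairwiseDisjoint (fun p => ball p (r / 2)) := by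
  intro p hp q hq hpq
  refine ball_disjoint_ball ?_
  by_contra! hlt
  exact hpq (hΓ p ⟨hp, mem_closedBall_self (dist_nonneg.trans (by linarith))⟩
    ⟨hq, mem_closedBall'.2 (by linarith)⟩)

theorem UnifDisc.finite_inter_of_isCompact (hΓ : UnifDisc Γ) {K : Set V} (hK : IsCompact K) :
    (Γ ∩ K).Finite := by
  obtain ⟨r, hr, hsub⟩ := hΓ
  obtain ⟨t, -, htfin, hKt⟩ := hK.finite_cover_balls hr
  refine (htfin.biUnion fun y _ => (hsub y).finite).subset ?_
  rintro p ⟨hpΓ, hpK⟩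
  obtain ⟨y, hy, hpy⟩ := mem_iUnion₂.1 (hKt hpK)
  exact mem_iUnion₂.2 ⟨y, hy, hpΓ, ball_subset_closedBall hpy⟩

theorem UnifDisc.finite_inter_ball [ProperSpace V] (hΓ : UnifDisc Γ) (x : V) (R : ℝ) :
    (Γ ∩ ball x R).Finite :=
  (hΓ.finite_inter_of_isCompact (isCompact_closedBall x R)).subset
    (inter_subset_inter_right _ ball_subset_closedBall)

theorem exists_inter_ball_ssubset [NormedSpace ℝ V] [Nontrivial V] [ProperSpace V] {ρ : ℝ}
    (hρ : 0 < ρ) (hfin : ∀ x, (Γ ∩ ball x ρ).Finite) {γ : V} (hγ : γ ∈ Γ) :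
    ∃ x₀ x₁ : V, Γ ∩ ball x₀ ρ ⊂ Γ ∩ ball x₁ ρ := by
  obtain ⟨u, hu⟩ := exists_norm_eq V zero_le_one
  have hnorm : ∀ s : ℝ, ‖s • u‖ = |s| := fun s => by rw [norm_smul, hu, mul_one, Real.norm_eq_abs]
  set x₀ := γ + ρ • u
  obtain ⟨r, ⟨hr0, hrρ⟩, hr⟩ :=
    exists_pos_lt_subset_ball hρ (hfin x₀).isClosed inter_subset_right
  -- slide the centre towards `γ` by less than the gap `ρ - r` left by the finitely many points
  set x₁ := γ + (ρ - (ρ - r) / 2) • u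
  have hγ₀ : dist γ x₀ = ρ := by rw [dist_self_add_right, hnorm, abs_of_pos hρ]
  have hγ₁ : dist γ x₁ < ρ := by
    rw [dist_self_add_right, hnorm, abs_lt]; constructor <;> linarith
  have hx₀₁ : dist x₀ x₁ = (ρ - r) / 2 := by
    rw [dist_add_left, dist_eq_norm, ← sub_smul, hnorm, abs_of_pos (by linarith)]; ring
  have hsub : Γ ∩ ball x₀ ρ ⊆ Γ ∩ ball x₁ ρ := fun p hp => by
    have hp₀ : dist p x₀ < r := hr hp
    exact ⟨hp.1, by rw [mem_ball]; linarith [dist_triangle p x₀ x₁]⟩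
  exact ⟨x₀, x₁, (ssubset_iff_of_subset hsub).2
    ⟨γ, ⟨hγ, hγ₁⟩, fun h => (mem_ball.1 h.2).ne hγ₀⟩⟩

end Discrete

theorem measureReal_ball_pos {V : Type*} [PseudoMetricSpace V] [ProperSpace V] [MeasurableSpace V]
    (μ : Measure V) [μ.IsOpenPosMeasure] [IsFiniteMeasureOnCompacts μ] (x : V) {r : ℝ}
    (hr : 0 < r) : 0 < μ.real (ball x r) :=
  ENNReal.toReal_pos (measure_ball_pos μ x hr).ne' measure_ball_lt_top.ne

section Haar

variable {V : Type*} [NormedAddCommGroup V] [MeasurableSpace V] [BorelSpace V]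
  (μ : Measure V) [μ.IsAddHaarMeasure]

theorem ncard_mul_measureReal_ball_le {s A : Set V} {δ : ℝ} (hs : s.Finite)
    (hdisj : s.PairwiseDisjoint (ball · δ)) (hA : ∀ p ∈ s, ball p δ ⊆ A) (hA' : μ A ≠ ∞) :
    s.ncard * μ.real (ball 0 δ) ≤ μ.real A := by
  lift s to Finset V using hs
  calc (s : Set V).ncard * μ.real (ball 0 δ) = μ.real (⋃ p ∈ s, ball p δ) := by
        rw [measureReal_biUnion_finset hdisj (fun _ _ => measurableSet_ball)
          (fun p _ => (measure_mono (hA p ‹_›)).trans_lt hA'.lt_top |>.ne)]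
        simp [Measure.addHaar_real_ball_center]
    _ ≤ μ.real A := measureReal_mono (iUnion₂_subset hA) hA'

theorem ncard_inter_annulus_le [ProperSpace V] {Γ : Set V} {δ R₁ R₂ : ℝ} (hδ : 0 < δ)
    (hΓ : Γ.PairwiseDisjoint (ball · δ)) (x : V) (hR : R₁ ≤ R₂)
    (hfin : (Γ ∩ (ball x R₂ \ ball x R₁)).Finite) :
    ((Γ ∩ (ball x R₂ \ ball x R₁)).ncard : ℝ) ≤
      (μ.real (ball 0 (R₂ + δ)) - μ.real (ball 0 (R₁ - δ))) / μ.real (ball (0 : V) δ) := by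
  have hsub : ∀ p ∈ Γ ∩ (ball x R₂ \ ball x R₁),
      ball p δ ⊆ ball x (R₂ + δ) \ ball x (R₁ - δ) := by
    rintro p ⟨-, hpR₂, hpR₁⟩ q hq
    rw [mem_ball] at hpR₂ hq
    rw [mem_ball, not_lt] at hpR₁
    refine ⟨mem_ball.2 ?_, fun hqR₁ => ?_⟩
    · linarith [dist_triangle q p x]
    · linarith [mem_ball.1 hqR₁, dist_triangle p q x, dist_comm p q]
  have hpack := ncard_mul_measureReal_ball_le μ hfin (hΓ.subset inter_subset_left) hsub
    ((measure_mono sdiff_subset).trans_lt measure_ball_lt_top).ne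
  rw [le_div_iff₀ (measureReal_ball_pos μ 0 hδ)]
  rwa [measureReal_sdiff (ball_subset_ball (by linarith)) measurableSet_ball,
    Measure.addHaar_real_ball_center μ x, Measure.addHaar_real_ball_center μ x] at hpack

theorem tendsto_measureReal_ball_add_div [Nontrivial V] [NormedSpace ℝ V] [FiniteDimensional ℝ V]
    (b : ℝ) : Tendsto (fun R => μ.real (ball (0 : V) (R + b)) / μ.real (ball 0 R)) atTop (𝓝 1) := by
  have hlim : Tendsto (fun R : ℝ => (1 + b / R) ^ finrank ℝ V) atTop (𝓝 1) := by
    have h : Tendsto (fun R : ℝ => 1 + b / R) atTop (𝓝 (1 + 0)) :=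
      tendsto_const_nhds.add (tendsto_const_nhds.div_atTop tendsto_id)
    simpa using h.pow (finrank ℝ V)
  refine hlim.congr' ?_
  filter_upwards [eventually_gt_atTop 0, eventually_ge_atTop (-b)] with R hR hRb
  have hV₁ := measureReal_ball_pos μ (0 : V) one_pos
  rw [← Measure.addHaar_real_closedBall_eq_addHaar_real_ball μ 0 (R + b),
    ← Measure.addHaar_real_closedBall_eq_addHaar_real_ball μ 0 R,
    Measure.addHaar_real_closedBall μ 0 hR.le, Measure.addHaar_real_closedBall μ 0 (by linarith)]
  rw [mul_div_mul_right _ _ hV₁.ne', ← div_pow, add_div, div_self hR.ne']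

theorem eventually_lt_mul_measureReal_ball [Nontrivial V] [NormedSpace ℝ V]
    [FiniteDimensional ℝ V] {c e : ℝ} (hce : c < e) (K a b b' : ℝ) :
    ∀ᶠ R in atTop, c * μ.real (ball (0 : V) (R + a)) +
      K * (μ.real (ball (0 : V) (R + b)) - μ.real (ball (0 : V) (R + b'))) <
        e * μ.real (ball (0 : V) R) := by
  have hlim := ((tendsto_measureReal_ball_add_div μ a).const_mul c).add
    (((tendsto_measureReal_ball_add_div μ b).sub
      (tendsto_measureReal_ball_add_div μ b')).const_mul K)
  rw [mul_one, sub_self, mul_zero, add_zero] at hlim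
  filter_upwards [hlim.eventually_lt_const hce, eventually_gt_atTop 0] with R hR hR0
  rw [← div_lt_iff₀ (measureReal_ball_pos μ (0 : V) hR0)]
  convert hR using 1
  ring

end Haar

section WAP

variable {V : Type*} [NormedAddCommGroup V] [MeasureSpace V] {Γ : Set V}

theorem WAPAt.one_le_mul_measureReal_ball [NormedSpace ℝ V] [Nontrivial V] [ProperSpace V]
    (hΓ : UnifDisc Γ) (hne : Γ.Nonempty) {ε ρ : ℝ} (hρ : 0 < ρ) (h : WAPAt Γ ε ρ) :
    1 ≤ ε * volume.real (ball (0 : V) ρ) := by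
  by_contra! hlt
  obtain ⟨γ, hγ⟩ := hne
  obtain ⟨x₀, x₁, hss⟩ := exists_inter_ball_ssubset hρ (hΓ.finite_inter_ball · ρ) hγ
  obtain ⟨w, hw⟩ := h x₀ x₁
  have hzero : (patchDiff Γ ρ x₀ x₁ w).ncard = 0 :=
    Nat.lt_one_iff.1 (by exact_mod_cast hw.trans_lt hlt)
  have heq : Γ ∩ ball x₀ ρ = (fun z => z - w) '' (Γ ∩ ball x₁ ρ) :=
    symmDiff_eq_bot.1 ((ncard_eq_zero (patchDiff_finite (hΓ.finite_inter_ball x₀ ρ)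
      (hΓ.finite_inter_ball x₁ ρ) w)).1 hzero)
  have hcard := ncard_lt_ncard hss (hΓ.finite_inter_ball x₁ ρ)
  rw [heq, ncard_image_of_injective _ sub_left_injective] at hcard
  exact hcard.false

theorem WAPAt.lt_of_mul_measureReal_ball_lt_one [NormedSpace ℝ V] [Nontrivial V] [ProperSpace V]
    [IsFiniteMeasureOnCompacts (volume : Measure V)] (hΓ : UnifDisc Γ) (hne : Γ.Nonempty)
    {ε R ρ : ℝ} (hR : 0 < R) (h : WAPAt Γ ε R) (hε : 0 ≤ ε)
    (hρ : ε * volume.real (ball (0 : V) ρ) < 1) : ρ < R := by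
  by_contra! hRρ
  have hvol : volume.real (ball (0 : V) R) ≤ volume.real (ball (0 : V) ρ) :=
    measureReal_mono (ball_subset_ball hRρ) measure_ball_lt_top.ne
  have := h.one_le_mul_measureReal_ball hΓ hne hR
  nlinarith

theorem WAPAt.of_subsingleton [Subsingleton V] {ε : ℝ} (hε : 0 ≤ ε) (R : ℝ) : WAPAt Γ ε R :=
  fun x y => ⟨0, by
    simp only [patchDiff, Subsingleton.elim x y, sub_zero, image_id', symmDiff_self,
      bot_eq_empty, ncard_empty, Nat.cast_zero]
    exact mul_nonneg hε measureReal_nonneg⟩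

theorem WAPAt.inter_translate [ProperSpace V] [BorelSpace V]
    [(volume : Measure V).IsAddHaarMeasure] {r ε ε' R : ℝ} (hr : 0 < r)
    (hdisc : ∀ z, (Γ ∩ closedBall z r).Subsingleton) {v : V} (h : WAPAt Γ ε' (R + ‖v‖))
    (hbound : 2 * (ε' * volume.real (ball (0 : V) (R + ‖v‖))) +
      2 * ((volume.real (ball (0 : V) (R + ‖v‖ + r / 2)) - volume.real (ball (0 : V) (R - r / 2))) /
        volume.real (ball (0 : V) (r / 2))) ≤ ε * volume.real (ball (0 : V) R)) :
    WAPAt {z ∈ Γ | z + v ∈ Γ} ε R := by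
  intro x y
  obtain ⟨w, hw⟩ := h x y
  refine ⟨w, ?_⟩
  have hfin := UnifDisc.finite_inter_ball ⟨r, hr, hdisc⟩
  have hshell : ∀ z : V, ((Γ ∩ (ball z (R + ‖v‖) \ ball z R)).ncard : ℝ) ≤
      (volume.real (ball (0 : V) (R + ‖v‖ + r / 2)) - volume.real (ball (0 : V) (R - r / 2))) /
        volume.real (ball (0 : V) (r / 2)) := fun z =>
    ncard_inter_annulus_le volume (half_pos hr) (pairwiseDisjoint_ball_half hdisc) z
      (le_add_of_nonneg_right (norm_nonneg v))
      ((hfin z _).subset (inter_subset_inter_right _ sdiff_subset))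
  have hcount : ((patchDiff {z ∈ Γ | z + v ∈ Γ} R x y w).ncard : ℝ) ≤ _ :=
    Nat.cast_le.2 (ncard_patchDiff_inter_translate_le le_rfl (hfin x _) (hfin y _))
  push_cast at hcount
  linarith [hshell x, hshell y]

theorem WAP.inter_translate [NormedSpace ℝ V] [FiniteDimensional ℝ V] [BorelSpace V]
    [(volume : Measure V).IsAddHaarMeasure] (hΓ : WAP Γ) (v : V) :
    ∀ ε > 0, ∃ R > 0, WAPAt {z ∈ Γ | z + v ∈ Γ} ε R := by
  intro ε hε
  rcases subsingleton_or_nontrivial V with hV | hV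
  · exact ⟨1, one_pos, .of_subsingleton hε.le 1⟩
  obtain ⟨⟨⟨r, hr, hdisc⟩, _, _, hdense⟩, hwap⟩ := hΓ
  have hne : Γ.Nonempty := (hdense 0).mono inter_subset_left
  obtain ⟨T, hT⟩ := eventually_atTop.1
    ((eventually_lt_mul_measureReal_ball (volume : Measure V) (half_lt_self hε)
      (2 / volume.real (ball (0 : V) (r / 2))) ‖v‖ (‖v‖ + r / 2) (-(r / 2))).and
        (eventually_gt_atTop 0))
  set M := volume.real (ball (0 : V) (T + ‖v‖))
  -- `ε' ≤ ε / 4` bounds the mismatch of `Γ`, while `ε' * M < 1` forces the matching radius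
  -- beyond `T + ‖v‖`, since patches of a nonempty Delone set never match exactly
  set ε' := min (ε / 4) (M + 1)⁻¹
  have hε' : 0 < ε' := lt_min (by positivity) (inv_pos.2 (by positivity))
  have hε'M : ε' * M < 1 :=
    (mul_le_mul_of_nonneg_right (min_le_right _ _) measureReal_nonneg).trans_lt
      (by rw [inv_mul_lt_iff₀ (by positivity)]; linarith)
  obtain ⟨R', hR'0, hR'⟩ : ∃ R' > 0, WAPAt Γ ε' R' := hwap ε' hε'
  have hlarge := hR'.lt_of_mul_measureReal_ball_lt_one ⟨r, hr, hdisc⟩ hne hR'0 hε'.le hε'M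
  obtain ⟨R, rfl⟩ : ∃ R, R' = R + ‖v‖ := ⟨R' - ‖v‖, by ring⟩
  obtain ⟨hgrowth, hR⟩ := hT R (by linarith)
  refine ⟨R, hR, hR'.inter_translate hr hdisc ?_⟩
  rw [← add_assoc, ← sub_eq_add_neg, div_mul_eq_mul_div (2 : ℝ), mul_div_assoc (2 : ℝ)] at hgrowth
  have hε'R := mul_le_mul_of_nonneg_right (min_le_left (ε / 4) (M + 1)⁻¹)
    (measureReal_nonneg (μ := volume) (s := ball (0 : V) (R + ‖v‖)))
  linarith

end WAP

theorem wap_inter_translate_general {n : ℕ} (Γ : Set (EuclideanSpace ℝ (Fin n)))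
    (hwap : WAP Γ) (v : EuclideanSpace ℝ (Fin n)) :
    ∀ ε > 0, ∃ R > 0, ∀ x y : EuclideanSpace ℝ (Fin n),
      ∃ w : EuclideanSpace ℝ (Fin n),
        ((symmDiff ({z ∈ Γ | z + v ∈ Γ} ∩ ball x R)
            ((fun z => z - w) '' ({z ∈ Γ | z + v ∈ Γ} ∩ ball y R))).ncard : ℝ)
          ≤ ε * (volume (ball (0 : EuclideanSpace ℝ (Fin n)) R)).toReal :=
  hwap.inter_translate v

/-- for a Meyer weakly almost periodic set Γ and any vector v,
the set Γ ∩ (Γ - v) = {x ∈ Γ | x + v ∈ Γ} satisfies the weak almost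
periodicity estimate. -/
theorem wap_inter_translate {n : ℕ} (Γ : Set (EuclideanSpace ℝ (Fin n)))
    (hmeyer : Meyer Γ) (hwap : WAP Γ) (v : EuclideanSpace ℝ (Fin n)) :
    ∀ ε > 0, ∃ R > 0, ∀ x y : EuclideanSpace ℝ (Fin n),
      ∃ w : EuclideanSpace ℝ (Fin n),
        ((symmDiff ({z ∈ Γ | z + v ∈ Γ} ∩ ball x R)
            ((fun z => z - w) '' ({z ∈ Γ | z + v ∈ Γ} ∩ ball y R))).ncard : ℝ)
          ≤ ε * (volume (ball (0 : EuclideanSpace ℝ (Fin n)) R)).toReal :=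
  wap_inter_translate_general Γ hwap v
end

section
/- If Γ ⊂ ℤⁿ is a weakly almost periodic set and S ⊂ ℝⁿ is a centrally symmetric convex body, then ∑_{u∈S} ρ_Γ(u) ≥ D(Γ)·#(S/2 ∩ ℤⁿ). -/
open Filter MeasureTheory Metric Pointwise

variable {E : Type*} [NormedAddCommGroup E] [MeasureSpace E]

/-!
Only lattice vectors `u ∈ S` can have positive frequency. Put `T = S/2 ∩ ℤⁿ`; convexity and
symmetry of `S` give `T - T ⊆ S`. Take a ball `B` of large radius `R` for which `A = Γ ∩ B` has
nearly `D(Γ)·vol B` points. Then `A + T` consists of lattice points of a ball of radius `R + O(1)`,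
so `#(A + T) ≤ (1 + o(1))·vol B` (translates of the unit cube are disjoint). By Cauchy–Schwarz,
`#A²·#T² ≤ #(A + T)·E(A, T)`, and the additive energy satisfies
`E(A, T) ≤ #T·∑_{u ∈ T - T} #(A ∩ (A - u))`. Dividing by `(vol B)²` and letting `R → ∞` yields
`D(Γ)²·#T ≤ ∑_{u ∈ S} D(Γ ∩ (Γ - u))`.
-/

open Topology Bornology Finset

lemma Convex.smul_sub_smul_of_neg_eq {V : Type*} [AddCommGroup V] [Module ℝ V] {S : Set V}
    (hS : Convex ℝ S) (hSsymm : -S = S) {a b : ℝ} (ha : 0 ≤ a) (hb : 0 ≤ b) :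
    a • S - b • S = (a + b) • S := by
  rw [hS.add_smul ha hb, sub_eq_add_neg, ← Set.smul_set_neg, hSsymm]

namespace Finset

variable {G : Type*} [AddCommGroup G] [DecidableEq G] {A T F : Finset G}

lemma addEnergy_le_card_mul_sum (hTF : ∀ t ∈ T, ∀ t' ∈ T, t - t' ∈ F) :
    A.addEnergy T ≤ #T * ∑ u ∈ F, #{a ∈ A | a + u ∈ A} := by
  -- A quadruple with `a₁ + t₁ = a₂ + t₂` is determined by `t₁`, `u = t₁ - t₂` and `a₁`,
  -- and then `a₁ + u = a₂ ∈ A`.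
  calc A.addEnergy T ≤ #(T ×ˢ {p ∈ F ×ˢ A | p.2 + p.1 ∈ A}) := by
        refine card_le_card_of_injOn (fun x => (x.2.1, x.2.1 - x.2.2, x.1.1)) ?_ ?_
        · rintro ⟨⟨a₁, a₂⟩, t₁, t₂⟩ hx
          simp only [coe_filter, mem_product, Set.mem_ofPred_eq] at hx
          obtain ⟨⟨⟨ha₁, ha₂⟩, ht₁, ht₂⟩, he⟩ := hx
          simp only [coe_product, coe_filter, Set.mem_prod, mem_coe, Set.mem_ofPred_eq, mem_product]
          refine ⟨ht₁, ⟨hTF _ ht₁ _ ht₂, ha₁⟩, ?_⟩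
          convert ha₂ using 1
          rw [← sub_eq_iff_eq_add.2 he.symm]
          abel
        · rintro ⟨⟨a₁, a₂⟩, t₁, t₂⟩ hx ⟨⟨a₁', a₂'⟩, t₁', t₂'⟩ hx' he
          simp only [coe_filter, mem_product, Set.mem_ofPred_eq] at hx hx'
          simp only [Prod.mk.injEq] at he
          obtain ⟨rfl, ht₂, rfl⟩ := he
          obtain rfl := sub_right_injective ht₂
          have : a₂ = a₂' := add_right_cancel (hx.2.symm.trans hx'.2)
          rw [this]
    _ = #T * ∑ u ∈ F, #{a ∈ A | a + u ∈ A} := by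
      rw [card_product, card_filter, sum_product]
      simp only [card_filter]

lemma sq_card_mul_card_le_card_add_mul_sum (hTF : ∀ t ∈ T, ∀ t' ∈ T, t - t' ∈ F) :
    #A ^ 2 * #T ≤ #(A + T) * ∑ u ∈ F, #{a ∈ A | a + u ∈ A} := by
  rcases T.eq_empty_or_nonempty with rfl | hT
  · simp
  refine Nat.le_of_mul_le_mul_right ?_ hT.card_pos
  calc #A ^ 2 * #T * #T = #A ^ 2 * #T ^ 2 := by ring
    _ ≤ #(A + T) * A.addEnergy T := le_card_add_mul_addEnergy A T
    _ ≤ #(A + T) * (#T * ∑ u ∈ F, #{a ∈ A | a + u ∈ A}) :=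
      Nat.mul_le_mul_left _ (addEnergy_le_card_mul_sum hTF)
    _ = #(A + T) * (∑ u ∈ F, #{a ∈ A | a + u ∈ A}) * #T := by ring

end Finset

lemma card_mul_measure_le_measure_ball {V : Type*} [SeminormedAddCommGroup V]
    [MeasurableSpace V] [MeasurableAdd V] (μ : Measure V) [μ.IsAddLeftInvariant] {C : Set V}
    {ρ : ℝ} (hC : MeasurableSet C) (hCρ : C ⊆ closedBall 0 ρ) {P : Finset V}
    (hP : (P : Set V).PairwiseDisjoint (· +ᵥ C)) {x : V} {r : ℝ} (hPr : ∀ z ∈ P, z ∈ ball x r) :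
    #P * μ C ≤ μ (ball x (r + ρ)) :=
  calc #P * μ C = ∑ z ∈ P, μ (z +ᵥ C) := by simp [measure_vadd]
    _ = μ (⋃ z ∈ P, z +ᵥ C) := (measure_biUnion_finset hP fun z _ => hC.const_vadd z).symm
    _ ≤ μ (ball x (r + ρ)) := by
      refine measure_mono (Set.iUnion₂_subset fun z hz => ?_)
      rintro _ ⟨c, hc, rfl⟩
      have hzx : dist z x < r := hPr z hz
      have hcρ : ‖c‖ ≤ ρ := mem_closedBall_zero_iff.1 (hCρ hc)
      change dist (z + c) x < r + ρ
      calc dist (z + c) x ≤ dist (z + c) z + dist z x := dist_triangle _ _ _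
        _ < ρ + r := by rw [dist_self_add_left]; linarith
        _ = r + ρ := add_comm _ _

lemma ciSup_sq_mul_le {ι : Sort*} [Nonempty ι] {a : ι → ℝ} {c M : ℝ} (ha : ∀ i, 0 ≤ a i)
    (hc : 0 ≤ c) (h : ∀ i, a i ^ 2 * c ≤ M) : (⨆ i, a i) ^ 2 * c ≤ M := by
  obtain ⟨i⟩ := ‹Nonempty ι›
  rcases hc.eq_or_lt with rfl | hc
  · simpa using h i
  have hMc : 0 ≤ M / c := div_nonneg ((by positivity : 0 ≤ a i ^ 2 * c).trans (h i)) hc.le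
  have hsup : (⨆ i, a i) ≤ √(M / c) :=
    ciSup_le fun i => Real.le_sqrt_of_sq_le ((le_div_iff₀ hc).2 (h i))
  have := pow_le_pow_left₀ (Real.iSup_nonneg ha) hsup 2
  rwa [Real.sq_sqrt hMc, le_div_iff₀ hc] at this

lemma eventually_sum_lt_sum_limsup_add {α ι : Type*} {l : Filter α} (F : Finset ι)
    {g : ι → α → ℝ} (hg : ∀ u ∈ F, IsBoundedUnder (· ≤ ·) l (g u)) {ε : ℝ} (hε : 0 < ε) :
    ∀ᶠ a in l, ∑ u ∈ F, g u a < ∑ u ∈ F, limsup (g u) l + ε := by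
  classical
  induction F using Finset.induction_on generalizing ε with
  | empty => simpa using Eventually.of_forall fun _ => hε
  | insert i F hi ih =>
    have h₁ := eventually_lt_of_limsup_lt (lt_add_of_pos_right (limsup (g i) l) (half_pos hε))
      (hg i (mem_insert_self i F))
    have h₂ := ih (fun u hu => hg u (mem_insert_of_mem hu)) (half_pos hε)
    filter_upwards [h₁, h₂] with a ha₁ ha₂
    rw [sum_insert hi, sum_insert hi]
    linarith

lemma sq_limsup_mul_le {α : Type*} {l : Filter α} [l.NeBot] {f g q : α → ℝ} {c G : ℝ}
    (hc : 0 ≤ c) (hf₀ : ∀ a, 0 ≤ f a) (hf : IsBoundedUnder (· ≤ ·) l f)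
    (hq : Tendsto q l (𝓝 1)) (hg : ∀ ε > 0, ∀ᶠ a in l, g a < G + ε)
    (h : ∀ᶠ a in l, f a ^ 2 * c ≤ q a * g a) :
    limsup f l ^ 2 * c ≤ G := by
  set D := limsup f l
  have hD : 0 ≤ D := le_limsup_of_frequently_le (Frequently.of_forall hf₀) hf
  have key : ∀ ε > 0, max (D - ε) 0 ^ 2 * c ≤ (1 + ε) * (G + ε) := by
    intro ε hε
    have hfD : ∃ᶠ a in l, D - ε < f a :=
      frequently_lt_of_lt_limsup (isCoboundedUnder_le_of_le l hf₀) (by linarith)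
    have hq' : ∀ᶠ a in l, q a ∈ Set.Ioo 0 (1 + ε) := hq (Ioo_mem_nhds one_pos (by linarith))
    obtain ⟨a, hfa, ⟨hq₀, hq₁⟩, hga, ha⟩ :=
      (hfD.and_eventually (hq'.and ((hg ε hε).and h))).exists
    have hg₀ : 0 ≤ g a :=
      (mul_nonneg_iff_of_pos_left hq₀).1 ((by positivity : 0 ≤ f a ^ 2 * c).trans ha)
    calc max (D - ε) 0 ^ 2 * c ≤ f a ^ 2 * c := by
          gcongr
          exact max_le hfa.le (hf₀ a)
      _ ≤ q a * g a := ha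
      _ ≤ (1 + ε) * (G + ε) := mul_le_mul hq₁.le hga.le hg₀ (by linarith)
  have hlim₁ : Tendsto (fun ε : ℝ => max (D - ε) 0 ^ 2 * c) (𝓝[>] 0) (𝓝 (D ^ 2 * c)) := by
    have : Continuous fun ε : ℝ => max (D - ε) 0 ^ 2 * c := by fun_prop
    simpa [max_eq_left hD] using (this.tendsto 0).mono_left nhdsWithin_le_nhds
  have hlim₂ : Tendsto (fun ε : ℝ => (1 + ε) * (G + ε)) (𝓝[>] 0) (𝓝 G) := by
    have : Continuous fun ε : ℝ => (1 + ε) * (G + ε) := by fun_prop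
    simpa using (this.tendsto 0).mono_left nhdsWithin_le_nhds
  exact le_of_tendsto_of_tendsto hlim₁ hlim₂ (eventually_mem_nhdsWithin.mono key)

lemma densR_nonneg (Γ : Set E) (R : ℝ) : 0 ≤ densR Γ R :=
  Real.iSup_nonneg fun _ => by positivity

lemma upDens_empty : upDens (∅ : Set E) = 0 := by
  rw [upDens, show densR (∅ : Set E) = fun _ => 0 from funext fun R => by simp [densR]]
  exact limsup_const 0

namespace MinkowskiWAP

variable {n : ℕ} {Γ : Set (EuclideanSpace ℝ (Fin n))}

def intLattice (n : ℕ) : AddSubgroup (EuclideanSpace ℝ (Fin n)) where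
  carrier := {x | ∀ i, ∃ m : ℤ, x i = m}
  add_mem' {x y} hx hy i := by
    obtain ⟨a, ha⟩ := hx i
    obtain ⟨b, hb⟩ := hy i
    exact ⟨a + b, by simp [ha, hb]⟩
  zero_mem' _ := ⟨0, by simp⟩
  neg_mem' {x} hx i := by
    obtain ⟨a, ha⟩ := hx i
    exact ⟨-a, by simp [ha]⟩

lemma eq_of_mem_intLattice_of_abs_sub_lt_one {x y : EuclideanSpace ℝ (Fin n)}
    (hx : x ∈ intLattice n) (hy : y ∈ intLattice n) (h : ∀ i, |x i - y i| < 1) : x = y := by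
  ext i
  obtain ⟨a, ha⟩ := hx i
  obtain ⟨b, hb⟩ := hy i
  have hab : |((a - b : ℤ) : ℝ)| < 1 := by push_cast; rw [← ha, ← hb]; exact h i
  have : a = b := by rw [← Int.cast_abs, ← Int.cast_one, Int.cast_lt, abs_lt] at hab; omega
  rw [ha, hb, this]

def unitCube (n : ℕ) : Set (EuclideanSpace ℝ (Fin n)) :=
  WithLp.ofLp ⁻¹' Set.univ.pi fun _ => Set.Ico (-2⁻¹ : ℝ) 2⁻¹

lemma measurableSet_unitCube : MeasurableSet (unitCube n) :=
  (MeasurableSet.univ_pi fun _ => measurableSet_Ico).preimage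
    (PiLp.volume_preserving_ofLp _).measurable

lemma volume_unitCube : volume (unitCube n) = 1 := by
  rw [unitCube, (PiLp.volume_preserving_ofLp _).measure_preimage
    (MeasurableSet.univ_pi fun _ => measurableSet_Ico).nullMeasurableSet, Real.volume_pi_Ico]
  norm_num

lemma unitCube_subset_closedBall : unitCube n ⊆ closedBall 0 √n := by
  intro y hy
  rw [mem_closedBall_zero_iff, EuclideanSpace.norm_eq]
  refine Real.sqrt_le_sqrt ?_
  calc ∑ i, ‖y i‖ ^ 2 ≤ ∑ _i : Fin n, (1 : ℝ) := Finset.sum_le_sum fun i _ => by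
        obtain ⟨h₁, h₂⟩ := hy i (Set.mem_univ i)
        rw [Real.norm_eq_abs, sq_abs]
        nlinarith
    _ = n := by simp

lemma pairwiseDisjoint_vadd_unitCube :
    (intLattice n : Set (EuclideanSpace ℝ (Fin n))).PairwiseDisjoint (· +ᵥ unitCube n) := by
  intro z hz w hw hne
  refine Set.disjoint_left.2 ?_
  rintro _ ⟨c, hc, rfl⟩ ⟨c', hc', he⟩
  refine hne (eq_of_mem_intLattice_of_abs_sub_lt_one hz hw fun i => ?_)
  have hi := congrArg (· i) he
  obtain ⟨h₁, h₂⟩ := hc i (Set.mem_univ i)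
  obtain ⟨h₁', h₂'⟩ := hc' i (Set.mem_univ i)
  simp only [vadd_eq_add, PiLp.add_apply] at hi h₁ h₂ h₁' h₂'
  rw [abs_lt]
  constructor <;> linarith

noncomputable def unitBallVolume (n : ℕ) : ℝ :=
  (volume (ball (0 : EuclideanSpace ℝ (Fin n)) 1)).toReal

lemma unitBallVolume_pos : 0 < unitBallVolume n :=
  ENNReal.toReal_pos (measure_ball_pos _ _ one_pos).ne' measure_ball_lt_top.ne

lemma volume_ball_toReal (x : EuclideanSpace ℝ (Fin n)) {r : ℝ} (hr : 0 < r) :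
    (volume (ball x r)).toReal = r ^ n * unitBallVolume n := by
  rw [Measure.addHaar_ball_of_pos _ _ hr, finrank_euclideanSpace_fin, ENNReal.toReal_mul,
    ENNReal.toReal_ofReal (by positivity), unitBallVolume]

lemma card_le_volume_ball {Q : Finset (EuclideanSpace ℝ (Fin n))}
    (hQΛ : ∀ q ∈ Q, q ∈ intLattice n) {x : EuclideanSpace ℝ (Fin n)} {r : ℝ}
    (hQ : ∀ q ∈ Q, q ∈ ball x r) :
    (#Q : ℝ) ≤ (volume (ball x (r + √n))).toReal := by
  have h := card_mul_measure_le_measure_ball volume measurableSet_unitCube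
    unitCube_subset_closedBall (pairwiseDisjoint_vadd_unitCube.subset fun q hq => hQΛ q hq) hQ
  rw [volume_unitCube, mul_one] at h
  simpa using ENNReal.toReal_mono measure_ball_lt_top.ne h

lemma finite_of_subset_intLattice_of_isBounded {P : Set (EuclideanSpace ℝ (Fin n))}
    (hPΛ : P ⊆ intLattice n) (hP : IsBounded P) : P.Finite := by
  by_contra hinf
  obtain ⟨r, hr⟩ := hP.subset_ball 0
  obtain ⟨Q, hQP, hQ⟩ :=
    Set.Infinite.exists_subset_card_eq hinf
      (⌊(volume (ball (0 : EuclideanSpace ℝ (Fin n)) (r + √n))).toReal⌋₊ + 1)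
  have h := card_le_volume_ball (fun q hq => hPΛ (hQP hq)) fun q hq => hr (hQP hq)
  rw [hQ, Nat.cast_add_one] at h
  linarith [Nat.lt_floor_add_one
    (volume (ball (0 : EuclideanSpace ℝ (Fin n)) (r + √n))).toReal]

lemma ncard_le_volume_ball {P : Set (EuclideanSpace ℝ (Fin n))}
    (hPΛ : P ⊆ intLattice n) {x : EuclideanSpace ℝ (Fin n)} {r : ℝ} (hP : P ⊆ ball x r) :
    (P.ncard : ℝ) ≤ (volume (ball x (r + √n))).toReal := by
  have hfin := finite_of_subset_intLattice_of_isBounded hPΛ (isBounded_ball.subset hP)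
  rw [Set.ncard_eq_toFinset_card P hfin]
  exact card_le_volume_ball (fun q hq => hPΛ (hfin.mem_toFinset.1 hq))
    fun q hq => hP (hfin.mem_toFinset.1 hq)

lemma sq_ncard_mul_card_le (hΓ : Γ ⊆ intLattice n)
    {T F : Finset (EuclideanSpace ℝ (Fin n))} (hTΛ : ∀ t ∈ T, t ∈ intLattice n) {ρ : ℝ}
    (hTρ : ∀ t ∈ T, ‖t‖ ≤ ρ) (hTF : ∀ t ∈ T, ∀ t' ∈ T, t - t' ∈ F)
    (x : EuclideanSpace ℝ (Fin n)) (R : ℝ) :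
    ((Γ ∩ ball x R).ncard : ℝ) ^ 2 * #T ≤
      (volume (ball x (R + ρ + √n))).toReal *
        ∑ u ∈ F, (({y ∈ Γ | y + u ∈ Γ} ∩ ball x R).ncard : ℝ) := by
  classical
  have hfin : (Γ ∩ ball x R).Finite :=
    finite_of_subset_intLattice_of_isBounded (Set.inter_subset_left.trans hΓ)
      (isBounded_ball.subset Set.inter_subset_right)
  set A := hfin.toFinset
  have hAT : ∀ z ∈ A + T, z ∈ ball x (R + ρ) := by
    intro z hz
    obtain ⟨a, ha, t, ht, rfl⟩ := Finset.mem_add.1 hz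
    have hax : dist a x < R := (hfin.mem_toFinset.1 ha).2
    calc dist (a + t) x ≤ dist (a + t) a + dist a x := dist_triangle _ _ _
      _ < ρ + R := by rw [dist_self_add_left]; linarith [hTρ t ht]
      _ = R + ρ := add_comm _ _
  have hATΛ : ∀ z ∈ A + T, z ∈ intLattice n := by
    intro z hz
    obtain ⟨a, ha, t, ht, rfl⟩ := Finset.mem_add.1 hz
    exact add_mem (hΓ (hfin.mem_toFinset.1 ha).1) (hTΛ t ht)
  have hpairs (u) : (#{a ∈ A | a + u ∈ A} : ℝ) ≤ ({y ∈ Γ | y + u ∈ Γ} ∩ ball x R).ncard := by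
    rw [← Set.ncard_coe_finset, Nat.cast_le]
    refine Set.ncard_le_ncard (fun a ha => ?_) (hfin.subset fun y hy => ⟨hy.1.1, hy.2⟩)
    obtain ⟨ha, hau⟩ := mem_filter.1 ha
    obtain ⟨haΓ, hax⟩ := hfin.mem_toFinset.1 ha
    exact ⟨⟨haΓ, (hfin.mem_toFinset.1 hau).1⟩, hax⟩
  calc ((Γ ∩ ball x R).ncard : ℝ) ^ 2 * #T = ((#A ^ 2 * #T : ℕ) : ℝ) := by
        rw [Set.ncard_eq_toFinset_card _ hfin]; push_cast; rfl
    _ ≤ ((#(A + T) * ∑ u ∈ F, #{a ∈ A | a + u ∈ A} : ℕ) : ℝ) :=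
        Nat.cast_le.2 (sq_card_mul_card_le_card_add_mul_sum hTF)
    _ ≤ _ := by
        rw [Nat.cast_mul, Nat.cast_sum]
        exact mul_le_mul (card_le_volume_ball hATΛ hAT) (sum_le_sum fun u _ => hpairs u)
          (sum_nonneg fun _ _ => Nat.cast_nonneg _) ENNReal.toReal_nonneg

lemma ncard_div_volume_le (hΓ : Γ ⊆ intLattice n)
    (x : EuclideanSpace ℝ (Fin n)) {R : ℝ} (hR : 0 < R) :
    ((Γ ∩ ball x R).ncard : ℝ) / (volume (ball x R)).toReal ≤ ((R + √n) / R) ^ n := by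
  have hω := unitBallVolume_pos (n := n)
  rw [div_le_iff₀ (by rw [volume_ball_toReal x hR]; positivity)]
  calc ((Γ ∩ ball x R).ncard : ℝ) ≤ (volume (ball x (R + √n))).toReal :=
        ncard_le_volume_ball (Set.inter_subset_left.trans hΓ) Set.inter_subset_right
    _ = ((R + √n) / R) ^ n * (volume (ball x R)).toReal := by
        rw [volume_ball_toReal x (by positivity), volume_ball_toReal x hR, div_pow]
        field_simp

lemma densR_le (hΓ : Γ ⊆ intLattice n) {R : ℝ}
    (hR : 0 < R) : densR Γ R ≤ ((R + √n) / R) ^ n :=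
  ciSup_le fun x => ncard_div_volume_le hΓ x hR

lemma ncard_div_volume_le_densR (hΓ : Γ ⊆ intLattice n)
    (x : EuclideanSpace ℝ (Fin n)) {R : ℝ} (hR : 0 < R) :
    ((Γ ∩ ball x R).ncard : ℝ) / (volume (ball x R)).toReal ≤ densR Γ R :=
  le_ciSup ⟨_, Set.forall_mem_range.2 fun x => ncard_div_volume_le hΓ x hR⟩ x

lemma tendsto_add_div_pow (c : ℝ) (n : ℕ) :
    Tendsto (fun R : ℝ => ((R + c) / R) ^ n) atTop (𝓝 1) := by
  have h : Tendsto (fun R : ℝ => 1 + c * R⁻¹) atTop (𝓝 1) := by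
    simpa using (tendsto_inv_atTop_zero.const_mul c).const_add 1
  refine (by simpa using h.pow n : Tendsto (fun R : ℝ => (1 + c * R⁻¹) ^ n) atTop (𝓝 1)).congr' ?_
  filter_upwards [eventually_gt_atTop 0] with R hR
  field_simp

lemma isBoundedUnder_densR (hΓ : Γ ⊆ intLattice n) :
    IsBoundedUnder (· ≤ ·) atTop (densR Γ) :=
  (tendsto_add_div_pow √n n).isBoundedUnder_le.mono_le <|
    (eventually_gt_atTop 0).mono fun _ hR => densR_le hΓ hR

lemma upDens_nonneg (hΓ : Γ ⊆ intLattice n) :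
    0 ≤ upDens Γ :=
  le_limsup_of_frequently_le (Frequently.of_forall (densR_nonneg Γ)) (isBoundedUnder_densR hΓ)

lemma sq_densR_mul_card_le (hΓ : Γ ⊆ intLattice n)
    {T F : Finset (EuclideanSpace ℝ (Fin n))} (hTΛ : ∀ t ∈ T, t ∈ intLattice n) {ρ : ℝ}
    (hρ : 0 ≤ ρ)
    (hTρ : ∀ t ∈ T, ‖t‖ ≤ ρ) (hTF : ∀ t ∈ T, ∀ t' ∈ T, t - t' ∈ F) {R : ℝ} (hR : 0 < R) :
    densR Γ R ^ 2 * #T ≤ ((R + ρ + √n) / R) ^ n * ∑ u ∈ F, densR {y ∈ Γ | y + u ∈ Γ} R := by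
  refine ciSup_sq_mul_le (fun x => by positivity) (Nat.cast_nonneg _) fun x => ?_
  have hω := unitBallVolume_pos (n := n)
  have hV := volume_ball_toReal x hR
  have hV₀ : 0 < (volume (ball x R)).toReal := by rw [hV]; positivity
  have hpairs (u : EuclideanSpace ℝ (Fin n)) :
      (({y ∈ Γ | y + u ∈ Γ} ∩ ball x R).ncard : ℝ) ≤
        densR {y ∈ Γ | y + u ∈ Γ} R * (volume (ball x R)).toReal :=
    (div_le_iff₀ hV₀).1 (ncard_div_volume_le_densR ((Set.sep_subset _ _).trans hΓ) x hR)
  calc (((Γ ∩ ball x R).ncard : ℝ) / (volume (ball x R)).toReal) ^ 2 * #T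
      = ((Γ ∩ ball x R).ncard : ℝ) ^ 2 * #T / (volume (ball x R)).toReal ^ 2 := by ring
    _ ≤ (volume (ball x (R + ρ + √n))).toReal *
          (∑ u ∈ F, densR {y ∈ Γ | y + u ∈ Γ} R * (volume (ball x R)).toReal) /
        (volume (ball x R)).toReal ^ 2 := by
      refine div_le_div_of_nonneg_right ((sq_ncard_mul_card_le hΓ hTΛ hTρ hTF x R).trans ?_)
        (by positivity)
      gcongr with u
      exact hpairs u
    _ = ((R + ρ + √n) / R) ^ n * ∑ u ∈ F, densR {y ∈ Γ | y + u ∈ Γ} R := by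
      rw [← sum_mul, volume_ball_toReal x (by positivity), hV, div_pow]
      field_simp

theorem sq_upDens_mul_card_le (hΓ : Γ ⊆ intLattice n)
    {T F : Finset (EuclideanSpace ℝ (Fin n))} (hTΛ : ∀ t ∈ T, t ∈ intLattice n)
    (hTF : ∀ t ∈ T, ∀ t' ∈ T, t - t' ∈ F) :
    upDens Γ ^ 2 * #T ≤ ∑ u ∈ F, upDens {y ∈ Γ | y + u ∈ Γ} := by
  obtain ⟨ρ, hρ, hTρ⟩ := T.finite_toSet.isBounded.subset_closedBall_lt 0 0
  have hpairs (u : EuclideanSpace ℝ (Fin n)) : {y ∈ Γ | y + u ∈ Γ} ⊆ intLattice n :=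
    (Set.sep_subset _ _).trans hΓ
  refine sq_limsup_mul_le (Nat.cast_nonneg _) (densR_nonneg Γ) (isBoundedUnder_densR hΓ)
    (tendsto_add_div_pow (ρ + √n) n)
    (fun ε hε => eventually_sum_lt_sum_limsup_add F
      (fun u _ => isBoundedUnder_densR (hpairs u)) hε) ?_
  filter_upwards [eventually_gt_atTop 0] with R hR
  simpa only [add_assoc] using sq_densR_mul_card_le hΓ hTΛ hρ.le
    (fun t ht => mem_closedBall_zero_iff.1 (hTρ ht)) hTF hR

lemma freq_eq_zero_of_notMem (hΓ : Γ ⊆ intLattice n)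
    {u : EuclideanSpace ℝ (Fin n)} (hu : u ∉ intLattice n) : freq Γ u = 0 := by
  have : {y ∈ Γ | y + u ∈ Γ} = ∅ := Set.eq_empty_of_forall_notMem fun y ⟨hy, hyu⟩ =>
    hu (by simpa using sub_mem (hΓ hyu) (hΓ hy))
  rw [freq, this, upDens_empty, zero_div]

lemma tsum_freq_eq_sum (hΓ : Γ ⊆ intLattice n)
    {S : Set (EuclideanSpace ℝ (Fin n))} (hS : (S ∩ intLattice n).Finite) :
    ∑' u : S, freq Γ u = ∑ u ∈ hS.toFinset, freq Γ u := by
  rw [tsum_subtype S (freq Γ), tsum_eq_sum (s := hS.toFinset)]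
  · exact sum_congr rfl fun u hu => Set.indicator_of_mem (hS.mem_toFinset.1 hu).1 _
  · intro u hu
    by_cases huS : u ∈ S
    · rw [Set.indicator_of_mem huS,
        freq_eq_zero_of_notMem hΓ fun hΛ => hu (hS.mem_toFinset.2 ⟨huS, hΛ⟩)]
    · exact Set.indicator_of_notMem huS _

end MinkowskiWAP

open MinkowskiWAP in
theorem minkowski_wap_int_general {n : ℕ} (Γ : Set (EuclideanSpace ℝ (Fin n)))
    (hint : ∀ x ∈ Γ, ∀ i : Fin n, ∃ m : ℤ, x i = (m : ℝ))
    (S : Set (EuclideanSpace ℝ (Fin n)))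
    (hSconv : Convex ℝ S) (hScomp : IsCompact S)
    (hSsymm : S = -S) :
    upDens Γ *
        ((((2 : ℝ)⁻¹ • S) ∩ {x : EuclideanSpace ℝ (Fin n) | ∀ i, ∃ m : ℤ, x i = (m : ℝ)}).ncard : ℝ)
      ≤ ∑' u : S, freq Γ (u : EuclideanSpace ℝ (Fin n)) := by
  have hΓ : Γ ⊆ intLattice n := hint
  change upDens Γ * (((2 : ℝ)⁻¹ • S ∩ intLattice n).ncard : ℝ) ≤ _
  have hT := finite_of_subset_intLattice_of_isBounded Set.inter_subset_right
    ((hScomp.smul (2⁻¹ : ℝ)).isBounded.subset Set.inter_subset_left)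
  have hF := finite_of_subset_intLattice_of_isBounded Set.inter_subset_right
    (hScomp.isBounded.subset Set.inter_subset_left)
  have hTF : ∀ t ∈ hT.toFinset, ∀ t' ∈ hT.toFinset, t - t' ∈ hF.toFinset := by
    simp only [Set.Finite.mem_toFinset]
    rintro t ⟨htS, htΛ⟩ t' ⟨ht'S, ht'Λ⟩
    refine ⟨?_, sub_mem htΛ ht'Λ⟩
    rw [← one_smul ℝ S, ← add_halves (1 : ℝ),
      ← hSconv.smul_sub_smul_of_neg_eq hSsymm.symm (by norm_num) (by norm_num)]
    simpa using Set.sub_mem_sub htS ht'S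
  rw [tsum_freq_eq_sum hΓ hF, Set.ncard_eq_toFinset_card _ hT]
  rcases (upDens_nonneg hΓ).eq_or_lt with hD | hD
  · simp [freq, ← hD]
  simp only [freq, ← sum_div]
  rw [le_div_iff₀ hD]
  calc upDens Γ * #hT.toFinset * upDens Γ = upDens Γ ^ 2 * #hT.toFinset := by ring
    _ ≤ _ := sq_upDens_mul_card_le hΓ (by simp) hTF

/-- Minkowski theorem for weakly almost periodic subsets of ℤⁿ:
∑_{u∈S} ρ_Γ(u) ≥ D(Γ)·#(S/2 ∩ ℤⁿ). -/
theorem minkowski_wap_int {n : ℕ} (Γ : Set (EuclideanSpace ℝ (Fin n)))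
    (hint : ∀ x ∈ Γ, ∀ i : Fin n, ∃ m : ℤ, x i = (m : ℝ))
    (hwap : WAP Γ)
    (S : Set (EuclideanSpace ℝ (Fin n)))
    (hSconv : Convex ℝ S) (hScomp : IsCompact S) (hSint : (interior S).Nonempty)
    (hSsymm : S = -S) :
    upDens Γ *
        ((((2 : ℝ)⁻¹ • S) ∩ {x : EuclideanSpace ℝ (Fin n) | ∀ i, ∃ m : ℤ, x i = (m : ℝ)}).ncard : ℝ)
      ≤ ∑' u : S, freq Γ (u : EuclideanSpace ℝ (Fin n)) :=
  minkowski_wap_int_general Γ hint S hSconv hScomp hSsymm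
end
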